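/- For every prime p and natural numbers n, r ≥ 0, B_{n+p^r, −r} ≡ B_{n, −r+1} (mod p), where B_{n,s} denotes the s-Bell number for integer s. -/
import Mathlib


open Finset

/-- Stirling numbers of the second kind. -/
def S2 : ℕ → ℕ → ℕ
  | 0, 0 => 1
  | 0, _ + 1 => 0
  | _ + 1, 0 => 0
  | n + 1, k + 1 => (k + 1) * S2 n (k + 1) + S2 n k

/-- Bell numbers. -/
def bell (n : ℕ) : ℕ := ∑ k ∈ Finset.range (n + 1), S2 n k

/-- r-Stirling numbers of the second kind. -/
def rS2 (r : ℕ) : ℕ → ℕ → ℕ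
  | 0, 0 => 1
  | 0, _ + 1 => 0
  | n + 1, 0 => r * rS2 r n 0
  | n + 1, k + 1 => rS2 r n k + (k + 1 + r) * rS2 r n (k + 1)

/-- Unsigned r-Stirling numbers of the first kind. -/
def rS1 (r : ℕ) : ℕ → ℕ → ℕ
  | 0, 0 => 1
  | 0, _ + 1 => 0
  | n + 1, 0 => (r + n) * rS1 r n 0
  | n + 1, k + 1 => rS1 r n k + (r + n) * rS1 r n (k + 1)

/-- r-Bell numbers for integer r. -/
def rBell (n : ℕ) (r : ℤ) : ℤ :=
  ∑ j ∈ Finset.range (n + 1), (n.choose j : ℤ) * r ^ (n - j) * (bell j : ℤ)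

/-- r-Bell numbers for natural r, via r-Stirling numbers. -/
def rBellNat (n r : ℕ) : ℕ := ∑ k ∈ Finset.range (n + 1), rS2 r n k

open Polynomial
lemma S2_zero_succ (k : ℕ) : S2 0 (k+1) = 0 := rfl
lemma S2_succ_zero (n : ℕ) : S2 (n+1) 0 = 0 := rfl
lemma S2_succ_succ (n k : ℕ) : S2 (n+1) (k+1) = (k+1) * S2 n (k+1) + S2 n k := rfl

lemma S2_eq_zero_of_lt : ∀ n k, n < k → S2 n k = 0 := by
  intro n
  induction n with
  | zero => intro k hk; obtain ⟨k, rfl⟩ := Nat.exists_eq_add_of_lt hk; rfl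
  | succ n ih =>
    intro k hk
    obtain ⟨m, rfl⟩ : ∃ m, k = m + 1 := ⟨k - 1, by omega⟩
    rw [S2_succ_succ, ih _ (by omega), ih _ (by omega)]
    simp

lemma S2_succ_eq_sum : ∀ n k, S2 (n+1) (k+1) = ∑ j ∈ range (n+1), n.choose j * S2 j k := by
  intro n
  induction n with
  | zero => intro k; simp [S2_succ_succ, S2_zero_succ]
  | succ n ih =>
    intro k
    match k with
    | 0 =>
      have hone : ∀ m, S2 (m+1) 1 = 1 := by
        intro m
        induction m with
        | zero => rfl
        | succ m ihm => rw [S2_succ_succ, ihm]; simp [S2_succ_zero]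
      rw [hone, Finset.sum_range_succ']
      simp [show ∀ j, S2 (j+1) 0 = 0 from fun j => rfl,
            show S2 0 0 = 1 from rfl]
    | k + 1 =>
      rw [S2_succ_succ, ih (k+1), ih k, Finset.mul_sum, ← Finset.sum_add_distrib]
      have key : ∀ j ∈ range (n+1),
          (k+1+1) * (n.choose j * S2 j (k+1)) + n.choose j * S2 j k
          = n.choose j * S2 (j+1) (k+1) + n.choose j * S2 j (k+1) := by
        intro j _
        rw [S2_succ_succ]
        ring
      rw [Finset.sum_congr rfl key, Finset.sum_add_distrib]
      -- RHS
      rw [Finset.sum_range_succ' (fun j => (n+1).choose j * S2 j (k+1))]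
      simp only [S2_zero_succ, mul_zero, add_zero]
      have pascal : ∀ j, (n+1).choose (j+1) = n.choose j + n.choose (j+1) :=
        fun j => Nat.choose_succ_succ n j
      simp only [pascal, add_mul]
      rw [Finset.sum_add_distrib]
      congr 1
      rw [Finset.sum_range_succ (fun j => n.choose (j+1) * S2 (j+1) (k+1))]
      rw [Nat.choose_succ_self, zero_mul, add_zero]
      rw [Finset.sum_range_succ' (fun j => n.choose j * S2 j (k+1))]
      simp [S2_zero_succ]

lemma bell_succ (n : ℕ) : bell (n+1) = ∑ j ∈ range (n+1), n.choose j * bell j := by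
  unfold bell
  rw [Finset.sum_range_succ' (fun k => S2 (n+1) k)]
  simp only [S2_succ_zero, add_zero]
  have : ∀ k ∈ range (n+1), S2 (n+1) (k+1) = ∑ j ∈ range (n+1), n.choose j * S2 j k :=
    fun k _ => S2_succ_eq_sum n k
  rw [Finset.sum_congr rfl this, Finset.sum_comm]
  refine Finset.sum_congr rfl fun j hj => ?_
  rw [← Finset.mul_sum]
  congr 1
  rw [Finset.mem_range] at hj
  rw [← Finset.sum_subset (Finset.range_subset_range.mpr (by omega : j + 1 ≤ n + 1))]
  intro x _ hx
  rw [Finset.mem_range, not_lt] at hx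
  exact S2_eq_zero_of_lt j x (by omega)

section BellFunctional
variable (p : ℕ) [Fact p.Prime]

/-- The Bell linear functional: `L (X^n) = bell n`. -/
noncomputable def Lb : Polynomial (ZMod p) →ₗ[ZMod p] ZMod p :=
  Polynomial.lsum (fun n => LinearMap.toSpanSingleton (ZMod p) (ZMod p) ((bell n : ZMod p)))

variable {p}

lemma Lb_monomial (n : ℕ) (a : ZMod p) : Lb p (monomial n a) = a * (bell n : ZMod p) := by
  simp [Lb, Polynomial.lsum_apply, Polynomial.sum_monomial_index,
    LinearMap.toSpanSingleton_apply, smul_eq_mul]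

lemma Lb_X_pow (n : ℕ) : Lb p (X ^ n) = (bell n : ZMod p) := by
  rw [Polynomial.X_pow_eq_monomial, Lb_monomial, one_mul]

lemma Lb_C_mul (a : ZMod p) (f : Polynomial (ZMod p)) :
    Lb p (C a * f) = a * Lb p f := by
  rw [← smul_eq_C_mul, map_smul, smul_eq_mul]

lemma Lb_X_mul (f : Polynomial (ZMod p)) :
    Lb p (X * f) = Lb p (f.comp (X + 1)) := by
  induction f using Polynomial.induction_on' with
  | add f g hf hg => rw [mul_add, map_add, hf, hg, add_comp, map_add]
  | monomial n a =>
    rw [X_mul_monomial, Lb_monomial]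
    rw [← C_mul_X_pow_eq_monomial, mul_comp, C_comp, X_pow_comp, Lb_C_mul]
    congr 1
    rw [add_pow]
    simp only [one_pow, mul_one]
    rw [map_sum]
    have : ∀ k ∈ range (n+1), Lb p (X ^ k * (n.choose k : Polynomial (ZMod p)))
        = (n.choose k : ZMod p) * (bell k : ZMod p) := by
      intro k _
      rw [mul_comm, ← C_eq_natCast, Lb_C_mul, Lb_X_pow]
    rw [Finset.sum_congr rfl this]
    rw [bell_succ]
    push_cast
    ring_nf

variable (p) in
/-- Falling factorial polynomial -/
noncomputable def fallPoly (m : ℕ) : Polynomial (ZMod p) :=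
  ∏ i ∈ range m, (X - C (i : ZMod p))

lemma fallPoly_succ' (k : ℕ) :
    fallPoly p (k+1) = X * (fallPoly p k).comp (X - 1) := by
  unfold fallPoly
  rw [Finset.prod_range_succ']
  simp only [Nat.cast_zero, map_zero, sub_zero]
  rw [mul_comm]
  congr 1
  rw [Polynomial.prod_comp]
  refine Finset.prod_congr rfl fun i _ => ?_
  rw [sub_comp, X_comp, C_comp]
  push_cast
  rw [map_add, C_1]
  ring

lemma Lb_fall_mul (k : ℕ) (f : Polynomial (ZMod p)) :
    Lb p (fallPoly p k * f) = Lb p (f.comp (X + C (k : ZMod p))) := by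
  induction k generalizing f with
  | zero => simp [fallPoly]
  | succ k ih =>
    rw [fallPoly_succ', mul_assoc, Lb_X_mul, mul_comp, comp_assoc]
    have : (X - 1 : Polynomial (ZMod p)).comp (X + 1) = X := by
      rw [sub_comp, X_comp, one_comp]; ring
    rw [this, comp_X, ih, comp_assoc, add_comp, X_comp, one_comp]
    congr 2
    push_cast
    rw [map_add, C_1]
    ring

lemma fallPoly_self : fallPoly p p = X ^ p - X := by
  have hp : p.Prime := Fact.out
  have hmono : (fallPoly p p).Monic :=
    monic_prod_of_monic _ _ fun i _ => monic_X_sub_C _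
  have hdeg : (fallPoly p p).natDegree = p := by
    rw [fallPoly, natDegree_prod_of_monic _ _ (fun i _ => monic_X_sub_C _)]
    simp only [natDegree_X_sub_C, Finset.sum_const, Finset.card_range, smul_eq_mul, mul_one]
  have hne : (X ^ p - X : Polynomial (ZMod p)) ≠ 0 :=
    FiniteField.X_pow_card_sub_X_ne_zero _ hp.one_lt
  have hdeg2 : (X ^ p - X : Polynomial (ZMod p)).natDegree = p :=
    FiniteField.X_pow_card_sub_X_natDegree_eq _ hp.one_lt
  have hlc : (X ^ p - X : Polynomial (ZMod p)).leadingCoeff = 1 := by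
    rw [leadingCoeff, hdeg2, coeff_sub, coeff_X_pow, if_pos rfl, coeff_X,
      if_neg (by have := hp.one_lt; omega : ¬ 1 = p), sub_zero]
  set g : Polynomial (ZMod p) := (X ^ p - X) - fallPoly p p with hg
  have heval : ∀ a : ZMod p, g.eval a = 0 := by
    intro a
    have h1 : (fallPoly p p).eval a = 0 := by
      rw [fallPoly, eval_prod]
      apply Finset.prod_eq_zero (i := a.val) (Finset.mem_range.mpr (ZMod.val_lt a))
      simp [ZMod.natCast_val, ZMod.cast_id]
    simp only [hg, eval_sub, eval_pow, eval_X, ZMod.pow_card, h1]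
    ring
  by_cases hzero : g = 0
  · rw [hg, sub_eq_zero] at hzero; exact hzero.symm
  exfalso
  apply hzero
  apply Polynomial.eq_zero_of_natDegree_lt_card_of_eval_eq_zero g Function.injective_id heval
  rw [ZMod.card]
  have hdlt : g.degree < (X ^ p - X : Polynomial (ZMod p)).degree :=
    degree_sub_lt (by rw [degree_eq_natDegree hne, degree_eq_natDegree hmono.ne_zero, hdeg, hdeg2])
      hne (by rw [hlc, hmono.leadingCoeff])
  rw [degree_eq_natDegree hne, hdeg2] at hdlt
  exact (natDegree_lt_iff_degree_lt hzero).mpr hdlt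

lemma fallPoly_mul (m : ℕ) : fallPoly p (p * m) = (fallPoly p p) ^ m := by
  induction m with
  | zero => simp [fallPoly]
  | succ m ih =>
    rw [Nat.mul_succ, fallPoly, Finset.prod_range_add, ← fallPoly, ih, pow_succ]
    congr 1
    rw [fallPoly]
    refine Finset.prod_congr rfl fun i _ => ?_
    congr 1
    push_cast
    simp [ZMod.natCast_self]

lemma fallPoly_pow (r : ℕ) :
    fallPoly p (p ^ (r+1)) = X ^ (p ^ (r+1)) - X ^ (p ^ r) := by
  have hp : p.Prime := Fact.out
  haveI : CharP (Polynomial (ZMod p)) p := by infer_instance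
  rw [pow_succ', fallPoly_mul, fallPoly_self, sub_pow_char_pow, ← pow_mul, ← pow_succ']

lemma Lb_X_pow_pow_mul (r : ℕ) (f : Polynomial (ZMod p)) :
    Lb p (X ^ (p ^ r) * f) = (r : ZMod p) * Lb p f + Lb p (f.comp (X + 1)) := by
  induction r generalizing f with
  | zero => simp [Lb_X_mul]
  | succ r ih =>
    have hsplit : (X ^ (p ^ (r+1)) : Polynomial (ZMod p))
        = fallPoly p (p ^ (r+1)) + X ^ (p ^ r) := by
      rw [fallPoly_pow]; ring
    rw [hsplit, add_mul, map_add, ih, Lb_fall_mul]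
    have hc : ((p ^ (r+1) : ℕ) : ZMod p) = 0 := by
      push_cast
      simp [ZMod.natCast_self]
    rw [hc, map_zero, add_zero, comp_X]
    push_cast
    ring

lemma Lb_rBell (m : ℕ) (s : ℤ) :
    ((rBell m s : ℤ) : ZMod p) = Lb p ((X + C ((s : ZMod p))) ^ m) := by
  set a : ZMod p := (s : ZMod p) with ha
  rw [add_pow, map_sum]
  have key : ∀ j ∈ range (m+1),
      Lb p (X ^ j * (C a) ^ (m-j) * ((m.choose j : ℕ) : Polynomial (ZMod p)))
      = (m.choose j : ZMod p) * a ^ (m-j) * (bell j : ZMod p) := by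
    intro j _
    rw [← C_pow, ← C_eq_natCast]
    have h : X ^ j * C (a ^ (m-j)) * C ((m.choose j : ZMod p))
        = C (a ^ (m-j)) * C ((m.choose j : ZMod p)) * X ^ j := by ring
    rw [h, ← map_mul, Lb_C_mul, Lb_X_pow]
    ring
  rw [Finset.sum_congr rfl key]
  unfold rBell
  push_cast
  exact Finset.sum_congr rfl fun j _ => by ring


end BellFunctional

theorem rBell_neg_shift (p : ℕ) (hp : p.Prime) (n r : ℕ) :
    rBell (n + p ^ r) (-(r : ℤ)) ≡ rBell n (-(r : ℤ) + 1) [ZMOD p] := by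
  haveI := Fact.mk hp
  rw [← ZMod.intCast_eq_intCast_iff]
  rw [Lb_rBell, Lb_rBell]
  set a : ZMod p := ((-(r : ℤ) : ℤ) : ZMod p) with ha
  have ha' : ((-(r : ℤ) + 1 : ℤ) : ZMod p) = a + 1 := by rw [ha]; push_cast; ring
  rw [ha']
  have hfr : (X + C a) ^ (p ^ r) = X ^ (p ^ r) + C a := by
    rw [add_pow_char_pow]
    congr 1
    rw [← C_pow, ZMod.pow_card_pow]
  rw [pow_add, hfr]
  have hsplit : (X + C a) ^ n * (X ^ (p ^ r) + C a)
      = X ^ (p ^ r) * (X + C a) ^ n + C a * (X + C a) ^ n := by ring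
  rw [hsplit, map_add, Lb_X_pow_pow_mul, Lb_C_mul]
  have hcomp : ((X + C a) ^ n).comp (X + 1) = (X + C (a + 1)) ^ n := by
    rw [pow_comp, add_comp, X_comp, C_comp, map_add, C_1]
    ring
  rw [hcomp]
  have har : a = -(r : ZMod p) := by rw [ha]; push_cast; ring
  rw [har]
  ring
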